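/- arXiv:2003.00120 — 8 statements merged into one kernel-verified Lean document; each statement's English description precedes it below -/
import Mathlib

section
/- Let R > 0 and x > 0 be real numbers, and for real β define Y⁺(β,x) = (e^x − 1)·e^{β} / (R + (e^x + 1)·e^{β} + e^{x+2β}/R) and Y⁻(β,x) = (e^x − 1)·e^{β} / (e^x·R + (e^x + 1)·e^{β} + e^{2β}/R). Then Y⁺(β,x) > Y⁻(β,x) if and only if R > e^{β}. -/
/-! Both fractions have the numerator `(eˣ - 1) e^β > 0`, so `Y⁺ > Y⁻` says that the first
denominator is the smaller one. With `a = eˣ` and `b = e^β` the two denominators differ by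
`(a - 1)(R - b²/R) = (a - 1)(R - b)(R + b)/R`, whose sign for `a > 1` is that of `R - b`. -/

lemma sub_denominators_eq {a b c R : ℝ} (hR : R ≠ 0) :
    (a * R + c + b ^ 2 / R) - (R + c + a * b ^ 2 / R) = (a - 1) * (R - b) * (R + b) / R := by
  field_simp
  ring

lemma denominator_lt_denominator_iff {a b c R : ℝ} (ha : 1 < a) (hb : 0 < b) (hR : 0 < R) :
    R + c + a * b ^ 2 / R < a * R + c + b ^ 2 / R ↔ b < R := by
  rw [← sub_pos, sub_denominators_eq hR.ne', div_pos_iff_of_pos_right hR,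
    mul_pos_iff_of_pos_right (by linarith), mul_pos_iff_of_pos_left (by linarith), sub_pos]

theorem stmt_2 (R x : ℝ) (hR : 0 < R) (hx : 0 < x) (β : ℝ) :
    (Real.exp x - 1) * Real.exp β /
        (R + (Real.exp x + 1) * Real.exp β + Real.exp (x + 2 * β) / R)
      > (Real.exp x - 1) * Real.exp β /
        (Real.exp x * R + (Real.exp x + 1) * Real.exp β + Real.exp (2 * β) / R)
    ↔ R > Real.exp β := by
  have hex : 1 < Real.exp x := Real.one_lt_exp_iff.mpr hx
  have hexp₂ : Real.exp (2 * β) = Real.exp β ^ 2 := by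
    rw [two_mul, Real.exp_add, sq]
  rw [Real.exp_add, hexp₂, gt_iff_lt, gt_iff_lt,
    div_lt_div_iff_of_pos_left (mul_pos (by linarith) (Real.exp_pos β)) (by positivity)
      (by positivity),
    denominator_lt_denominator_iff hex (Real.exp_pos β) hR]
end

section
/- Let R > 0 and x > 0 be real numbers. For every real β, Y⁺(β,x) = (e^x − 1)·e^{β} / (R + (e^x + 1)·e^{β} + e^{x+2β}/R) satisfies Y⁺(β,x) ≤ (e^{x/2} − 1)/(e^{x/2} + 1), with equality if and only if R = e^{β + x/2}. -/
section TiltedExpectation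

variable {K : Type*} [Field K] [LinearOrder K] [IsStrictOrderedRing K] {a b R : K}

/-- The deficit is a multiple of the square `(R - a b)²`, which is where both the bound and its
equality case come from. -/
theorem sub_div_add_one_sub_tilted_eq (ha : 0 < a) (hb : 0 < b) (hR : 0 < R) :
    (a - 1) / (a + 1) - (a ^ 2 - 1) * b / (R + (a ^ 2 + 1) * b + a ^ 2 * b ^ 2 / R)
      = (a - 1) * (R - a * b) ^ 2 / ((a + 1) * (R ^ 2 + (a ^ 2 + 1) * b * R + a ^ 2 * b ^ 2)) := by
  have hD : 0 < R ^ 2 + (a ^ 2 + 1) * b * R + a ^ 2 * b ^ 2 := by positivity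
  field_simp
  ring

theorem tilted_le_sub_div_add_one (ha : 1 < a) (hb : 0 < b) (hR : 0 < R) :
    (a ^ 2 - 1) * b / (R + (a ^ 2 + 1) * b + a ^ 2 * b ^ 2 / R) ≤ (a - 1) / (a + 1) := by
  rw [← sub_nonneg, sub_div_add_one_sub_tilted_eq (by linarith) hb hR]
  have : 0 < a - 1 := sub_pos.mpr ha
  positivity

theorem tilted_eq_sub_div_add_one_iff (ha : 1 < a) (hb : 0 < b) (hR : 0 < R) :
    (a ^ 2 - 1) * b / (R + (a ^ 2 + 1) * b + a ^ 2 * b ^ 2 / R) = (a - 1) / (a + 1)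
      ↔ R = a * b := by
  have ha0 : 0 < a := by linarith
  have hD : 0 < R ^ 2 + (a ^ 2 + 1) * b * R + a ^ 2 * b ^ 2 := by positivity
  rw [eq_comm, ← sub_eq_zero, sub_div_add_one_sub_tilted_eq ha0 hb hR, div_eq_zero_iff,
    mul_eq_zero, sub_eq_zero, sq_eq_zero_iff, sub_eq_zero]
  have : a ≠ 1 := ha.ne'
  have : (a + 1) * (R ^ 2 + (a ^ 2 + 1) * b * R + a ^ 2 * b ^ 2) ≠ 0 := by positivity
  tauto

end TiltedExpectation

theorem stmt_3 (R x : ℝ) (hR : 0 < R) (hx : 0 < x) (β : ℝ) :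
    (Real.exp x - 1) * Real.exp β /
        (R + (Real.exp x + 1) * Real.exp β + Real.exp (x + 2 * β) / R)
      ≤ (Real.exp (x / 2) - 1) / (Real.exp (x / 2) + 1)
    ∧ ((Real.exp x - 1) * Real.exp β /
        (R + (Real.exp x + 1) * Real.exp β + Real.exp (x + 2 * β) / R)
      = (Real.exp (x / 2) - 1) / (Real.exp (x / 2) + 1)
        ↔ R = Real.exp (β + x / 2)) := by
  have ha : 1 < Real.exp (x / 2) := Real.one_lt_exp_iff.mpr (by positivity)
  have hexp : Real.exp x = Real.exp (x / 2) ^ 2 := by rw [sq, ← Real.exp_add, add_halves]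
  have hexp' : Real.exp (x + 2 * β) = Real.exp (x / 2) ^ 2 * Real.exp β ^ 2 := by
    rw [Real.exp_add, hexp, two_mul, Real.exp_add, sq (Real.exp β)]
  rw [hexp, hexp', Real.exp_add, mul_comm (Real.exp β)]
  exact ⟨tilted_le_sub_div_add_one ha (Real.exp_pos β) hR,
    tilted_eq_sub_div_add_one_iff ha (Real.exp_pos β) hR⟩
end

section
/- Let R > 0 and x > 0 be real numbers. For every real β, Y⁻(β,x) = (e^x − 1)·e^{β} / (e^x·R + (e^x + 1)·e^{β} + e^{2β}/R) satisfies Y⁻(β,x) ≤ (e^{x/2} − 1)/(e^{x/2} + 1), with equality if and only if R = e^{β − x/2}. -/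
/-! With `a = e^{x/2} > 1` and `E = e^β`, the denominator of `Y⁻` is
`(a + 1)² E + (a R - E)² / R`, a perfect square over `R` added to `(a + 1)² E`.
Hence `Y⁻ = (a - 1)/(a + 1) · B / (B + s)` with `B = (a + 1)² E > 0` and `s = (a R - E)² / R ≥ 0`,
which is at most `(a - 1)/(a + 1)`, with equality exactly when `a R = E`. -/

lemma mul_div_add_le_and_eq_iff {c B s : ℝ} (hc : 0 < c) (hB : 0 < B) (hs : 0 ≤ s) :
    c * B / (B + s) ≤ c ∧ (c * B / (B + s) = c ↔ s = 0) := by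
  have hBs : 0 < B + s := by linarith
  refine ⟨?_, ?_⟩
  · rw [div_le_iff₀ hBs]
    nlinarith
  · rw [div_eq_iff hBs.ne']
    constructor
    · intro h
      nlinarith
    · rintro rfl
      ring

lemma denom_eq_add_sq_div {a E R : ℝ} (hR : R ≠ 0) :
    a ^ 2 * R + (a ^ 2 + 1) * E + E ^ 2 / R = (a + 1) ^ 2 * E + (a * R - E) ^ 2 / R := by
  field_simp
  ring

lemma sq_div_eq_zero_iff {a E R : ℝ} (ha : a ≠ 0) (hR : R ≠ 0) :
    (a * R - E) ^ 2 / R = 0 ↔ R = E / a := by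
  rw [div_eq_zero_iff, or_iff_left hR, sq_eq_zero_iff, sub_eq_zero, eq_div_iff ha, mul_comm]

theorem tilted_ratio_le_and_eq_iff {a E R : ℝ} (ha : 1 < a) (hE : 0 < E) (hR : 0 < R) :
    (a ^ 2 - 1) * E / (a ^ 2 * R + (a ^ 2 + 1) * E + E ^ 2 / R) ≤ (a - 1) / (a + 1)
    ∧ ((a ^ 2 - 1) * E / (a ^ 2 * R + (a ^ 2 + 1) * E + E ^ 2 / R) = (a - 1) / (a + 1)
        ↔ R = E / a) := by
  have hc : 0 < (a - 1) / (a + 1) := div_pos (by linarith) (by linarith)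
  have hB : 0 < (a + 1) ^ 2 * E := by positivity
  have hs : 0 ≤ (a * R - E) ^ 2 / R := by positivity
  have hY : (a ^ 2 - 1) * E / (a ^ 2 * R + (a ^ 2 + 1) * E + E ^ 2 / R)
      = (a - 1) / (a + 1) * ((a + 1) ^ 2 * E) / ((a + 1) ^ 2 * E + (a * R - E) ^ 2 / R) := by
    rw [denom_eq_add_sq_div hR.ne']
    congr 1
    field_simp
    ring
  rw [hY, ← sq_div_eq_zero_iff (by linarith) hR.ne']
  exact mul_div_add_le_and_eq_iff hc hB hs

theorem stmt_4 (R x : ℝ) (hR : 0 < R) (hx : 0 < x) (β : ℝ) :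
    (Real.exp x - 1) * Real.exp β /
        (Real.exp x * R + (Real.exp x + 1) * Real.exp β + Real.exp (2 * β) / R)
      ≤ (Real.exp (x / 2) - 1) / (Real.exp (x / 2) + 1)
    ∧ ((Real.exp x - 1) * Real.exp β /
        (Real.exp x * R + (Real.exp x + 1) * Real.exp β + Real.exp (2 * β) / R)
      = (Real.exp (x / 2) - 1) / (Real.exp (x / 2) + 1)
        ↔ R = Real.exp (β - x / 2)) := by
  have hx_sq : Real.exp x = Real.exp (x / 2) ^ 2 := by
    rw [← Real.exp_nat_mul]
    ring_nf
  have hβ_sq : Real.exp (2 * β) = Real.exp β ^ 2 := by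
    rw [← Real.exp_nat_mul]
    norm_num
  rw [hx_sq, hβ_sq, Real.exp_sub]
  exact tilted_ratio_le_and_eq_iff (Real.one_lt_exp_iff.mpr (half_pos hx)) (Real.exp_pos β) hR
end

section
/- Let R > 0 and x > 0 be real numbers, and define Y(β) = (e^x − 1) / (R·e^{−β} + e^x + 1 + e^{x+β}/R) if e^{β} < R, and Y(β) = (e^x − 1) / (R·e^{x−β} + e^x + 1 + e^{β}/R) if e^{β} ≥ R. Then Y is monotonically increasing on (−∞, log R − x/2], monotonically decreasing on [log R − x/2, log R], monotonically increasing on [log R, log R + x/2], and monotonically decreasing on [log R + x/2, ∞). -/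
/-!
On each branch the denominator of `Y` is `e^x + 1 + 2 e^{x/2} cosh (β - s)`, with centre
`s = log R - x/2` for `β ≤ log R` and `s = log R + x/2` for `β ≥ log R`; at `β = log R` the two
agree because `cosh` is even. Since `cosh (β - s)` decreases for `β ≤ s` and increases for
`β ≥ s`, `Y` increases up to each centre and decreases after it.
-/

open Real Set

lemma monotoneOn_div_add_mul_cosh_sub {K A B : ℝ} (s : ℝ) (hK : 0 ≤ K) (hA : 0 < A)
    (hB : 0 ≤ B) : MonotoneOn (fun t => K / (A + B * cosh (t - s))) (Iic s) := by
  intro a ha b hb hab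
  have hcosh : cosh (b - s) ≤ cosh (a - s) := by
    rw [cosh_le_cosh, abs_of_nonpos (sub_nonpos.2 hb), abs_of_nonpos (sub_nonpos.2 ha)]
    linarith
  have hpos : 0 < A + B * cosh (b - s) := by positivity
  exact div_le_div_of_nonneg_left hK hpos (by gcongr)

lemma antitoneOn_div_add_mul_cosh_sub {K A B : ℝ} (s : ℝ) (hK : 0 ≤ K) (hA : 0 < A)
    (hB : 0 ≤ B) : AntitoneOn (fun t => K / (A + B * cosh (t - s))) (Ici s) := by
  intro a ha b hb hab
  have hcosh : cosh (a - s) ≤ cosh (b - s) := by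
    rw [cosh_le_cosh, abs_of_nonneg (sub_nonneg.2 ha), abs_of_nonneg (sub_nonneg.2 hb)]
    linarith
  have hpos : 0 < A + B * cosh (a - s) := by positivity
  exact div_le_div_of_nonneg_left hK hpos (by gcongr)

lemma mul_exp_sub_add_exp_add_div {c : ℝ} (hc : 0 < c) (p q t : ℝ) :
    c * exp (p - t) + exp (q + t) / c
      = 2 * exp ((p + q) / 2) * cosh (t - (log c + (p - q) / 2)) := by
  obtain ⟨L, rfl⟩ : ∃ L, c = exp L := ⟨log c, (exp_log hc).symm⟩
  rw [log_exp, cosh_eq, ← exp_add, ← exp_sub]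
  field_simp
  simp only [mul_add, ← exp_add]
  rw [add_comm]
  congr 2 <;> ring

lemma mul_exp_neg_add_exp_add_div {R : ℝ} (hR : 0 < R) (x t : ℝ) :
    R * exp (-t) + exp (x + t) / R = 2 * exp (x / 2) * cosh (t - (log R - x / 2)) := by
  convert mul_exp_sub_add_exp_add_div hR 0 x t using 4 <;> ring

lemma mul_exp_sub_add_exp_div {R : ℝ} (hR : 0 < R) (x t : ℝ) :
    R * exp (x - t) + exp t / R = 2 * exp (x / 2) * cosh (t - (log R + x / 2)) := by
  convert mul_exp_sub_add_exp_add_div hR x 0 t using 4 <;> ring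

theorem stmt_5 (R x : ℝ) (hR : 0 < R) (hx : 0 < x)
    (Y : ℝ → ℝ)
    (hY : Y = fun β =>
      if Real.exp β < R then
        (Real.exp x - 1) / (R * Real.exp (-β) + Real.exp x + 1 + Real.exp (x + β) / R)
      else
        (Real.exp x - 1) / (R * Real.exp (x - β) + Real.exp x + 1 + Real.exp β / R)) :
    MonotoneOn Y (Set.Iic (Real.log R - x / 2)) ∧
      AntitoneOn Y (Set.Icc (Real.log R - x / 2) (Real.log R)) ∧
      MonotoneOn Y (Set.Icc (Real.log R) (Real.log R + x / 2)) ∧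
      AntitoneOn Y (Set.Ici (Real.log R + x / 2)) := by
  set F : ℝ → ℝ → ℝ := fun s t => (exp x - 1) / (exp x + 1 + 2 * exp (x / 2) * cosh (t - s))
  have hK : 0 ≤ exp x - 1 := sub_nonneg.2 (one_le_exp hx.le)
  have hA : 0 < exp x + 1 := by positivity
  have hB : 0 ≤ 2 * exp (x / 2) := by positivity
  have hright : EqOn Y (F (log R + x / 2)) (Ici (log R)) := by
    intro t ht
    have hle : ¬ exp t < R := by rwa [← lt_log_iff_exp_lt hR, not_lt]
    simp only [hY, if_neg hle, F, ← mul_exp_sub_add_exp_div hR]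
    ring
  have hleft : EqOn Y (F (log R - x / 2)) (Iic (log R)) := by
    intro t ht
    rcases (mem_Iic.1 ht).lt_or_eq with hlt | rfl
    · simp only [hY, if_pos ((lt_log_iff_exp_lt hR).1 hlt), F, ← mul_exp_neg_add_exp_add_div hR]
      ring
    · rw [hright (mem_Ici.2 le_rfl)]
      simp only [F, show log R - (log R + x / 2) = -(log R - (log R - x / 2)) by ring, cosh_neg]
  refine ⟨?_, ?_, ?_, ?_⟩
  · refine (monotoneOn_div_add_mul_cosh_sub _ hK hA hB).congr (hleft.symm.mono ?_)
    exact Iic_subset_Iic.2 (by linarith)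
  · exact (antitoneOn_div_add_mul_cosh_sub _ hK hA hB).mono Icc_subset_Ici_self |>.congr
      (hleft.symm.mono Icc_subset_Iic_self)
  · exact (monotoneOn_div_add_mul_cosh_sub _ hK hA hB).mono Icc_subset_Iic_self |>.congr
      (hright.symm.mono Icc_subset_Ici_self)
  · refine (antitoneOn_div_add_mul_cosh_sub _ hK hA hB).congr (hright.symm.mono ?_)
    exact Ici_subset_Ici.2 (by linarith)
end

section
/- Let R > 0 and x, β₀ be real numbers, and let D = R·e^{−β₀} + e^x + 1 + e^{x+β₀}/R and Y = (e^x − 1)/D. Then (e^{x/2} − 1)/(e^{x/2} + 1) − Y = (Y/(e^{x/2} + 1)²)·(√(R·e^{−β₀}) − √(e^{x+β₀}/R))². -/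
/-! With `a = R e^{-β₀}`, `b = e^{x+β₀}/R` and `t = e^{x/2} = √(ab)`, the denominator splits as
`D = (√a - √b)² + (t + 1)²`, after which the identity is rational in `t` and `(√a - √b)²`. -/

open Real

lemma sub_one_div_add_one_sub_div_eq {t q : ℝ} (ht : t + 1 ≠ 0) (hD : q + (t + 1) ^ 2 ≠ 0) :
    (t - 1) / (t + 1) - (t ^ 2 - 1) / (q + (t + 1) ^ 2)
      = (t ^ 2 - 1) / (q + (t + 1) ^ 2) / (t + 1) ^ 2 * q := by
  field_simp
  ring

lemma sqrt_sub_sqrt_sq {a b : ℝ} (ha : 0 ≤ a) (hb : 0 ≤ b) :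
    (√a - √b) ^ 2 = a + b - 2 * √(a * b) := by
  rw [sub_sq, sq_sqrt ha, sq_sqrt hb, sqrt_mul ha]
  ring

lemma sqrt_mul_exp_neg_mul_exp_add_div {R : ℝ} (hR : R ≠ 0) (x β₀ : ℝ) :
    √(R * exp (-β₀) * (exp (x + β₀) / R)) = exp (x / 2) := by
  rw [exp_half, exp_add, exp_neg]
  congr 1
  field_simp

theorem stmt_6 (R x β₀ : ℝ) (hR : 0 < R)
    (D Y : ℝ)
    (hD : D = R * Real.exp (-β₀) + Real.exp x + 1 + Real.exp (x + β₀) / R)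
    (hY : Y = (Real.exp x - 1) / D) :
    (Real.exp (x / 2) - 1) / (Real.exp (x / 2) + 1) - Y
      = Y / (Real.exp (x / 2) + 1) ^ 2 *
        (Real.sqrt (R * Real.exp (-β₀)) - Real.sqrt (Real.exp (x + β₀) / R)) ^ 2 := by
  set t := exp (x / 2)
  have hexp : exp x = t ^ 2 := by rw [← exp_nat_mul]; ring_nf
  have hsplit : D = (√(R * exp (-β₀)) - √(exp (x + β₀) / R)) ^ 2 + (t + 1) ^ 2 := by
    rw [sqrt_sub_sqrt_sq (by positivity) (by positivity),
      sqrt_mul_exp_neg_mul_exp_add_div hR.ne', hD, hexp]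
    ring
  have hDpos : 0 < D := by rw [hD]; positivity
  rw [hsplit] at hDpos
  rw [hY, hexp, hsplit]
  exact sub_one_div_add_one_sub_div_eq (by positivity) hDpos.ne'
end

section
/- Let x > 0, R > 0, and β₀ be real with e^{β₀} < R. Set M = (e^{x/2} − 1)/(e^{x/2} + 1) and Y = (e^x − 1)/(R·e^{−β₀} + e^x + 1 + e^{x+β₀}/R). If Y ≥ M/2 and M − Y < M³/2, then 1 < R·e^{−β₀} < e^x. -/
/-!
Write `t = R e^{-β₀}`, so that `e^{β₀} < R` says `1 < t`. If `e^x ≤ t`, then `(t - 1)(t - e^x) ≥ 0`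
gives `t + e^x / t ≥ e^x + 1`, hence `Y ≤ (e^x - 1) / (2 (e^x + 1)) = M / (1 + M²)`: this is the
double-angle formula `tanh (x/2) = 2 tanh (x/4) / (1 + tanh² (x/4))`, as `M = tanh (x/4)`.
Then `M - Y ≥ M³ / (1 + M²) ≥ M³ / 2`, since `0 ≤ M ≤ 1`.
-/

open Real

lemma add_one_le_add_div_of_le {a t : ℝ} (ht : 1 ≤ t) (hat : a ≤ t) : a + 1 ≤ t + a / t := by
  have htpos : 0 < t := by linarith
  rw [← sub_nonneg, show t + a / t - (a + 1) = (t - 1) * (t - a) / t by field_simp; ring]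
  exact div_nonneg (mul_nonneg (by linarith) (by linarith)) htpos.le

lemma sq_sub_one_div_eq_double_angle (s : ℝ) (hs : 0 < s) :
    (s ^ 2 - 1) / (2 * (s ^ 2 + 1)) =
      (s - 1) / (s + 1) / (1 + ((s - 1) / (s + 1)) ^ 2) := by
  have : (s + 1) ^ 2 + (s - 1) ^ 2 = 2 * (s ^ 2 + 1) := by ring
  field_simp
  rw [this]
  ring

lemma cube_div_two_le_sub_div {m : ℝ} (h0 : 0 ≤ m) (h1 : m ≤ 1) :
    m ^ 3 / 2 ≤ m - m / (1 + m ^ 2) := by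
  have hpos : 0 < 1 + m ^ 2 := by positivity
  rw [show m - m / (1 + m ^ 2) = m ^ 3 / (1 + m ^ 2) by field_simp; ring]
  exact div_le_div_of_nonneg_left (by positivity) hpos (by nlinarith)

theorem stmt_8_general (x R β₀ : ℝ) (hx : 0 < x) (hR : 0 < R) (hβ : Real.exp β₀ < R)
    (M Y : ℝ)
    (hM : M = (Real.exp (x / 2) - 1) / (Real.exp (x / 2) + 1))
    (hY : Y = (Real.exp x - 1) /
      (R * Real.exp (-β₀) + Real.exp x + 1 + Real.exp (x + β₀) / R))
    (h2 : M - Y < M ^ 3 / 2) :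
    1 < R * Real.exp (-β₀) ∧ R * Real.exp (-β₀) < Real.exp x := by
  set t := R * exp (-β₀) with ht_def
  have ht : 1 < t := by
    rw [ht_def, exp_neg, lt_mul_inv_iff₀ (exp_pos β₀), one_mul]
    exact hβ
  refine ⟨ht, lt_of_not_ge fun hxt => ?_⟩
  have hfrac : exp (x + β₀) / R = exp x / t := by
    rw [exp_add, ht_def, exp_neg]
    field_simp
  have hY_le : Y ≤ (exp x - 1) / (2 * (exp x + 1)) := by
    rw [hY, hfrac]
    have := add_one_le_add_div_of_le ht.le hxt
    exact div_le_div_of_nonneg_left (by linarith [add_one_le_exp x]) (by positivity) (by linarith)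
  have hs : 1 < exp (x / 2) := one_lt_exp_iff.mpr (by linarith)
  have hY_bound : (exp x - 1) / (2 * (exp x + 1)) = M / (1 + M ^ 2) := by
    rw [hM, ← sq_sub_one_div_eq_double_angle _ (by linarith), ← exp_nat_mul]
    ring_nf
  have hM0 : 0 ≤ M := by rw [hM]; exact div_nonneg (by linarith) (by linarith)
  have hM1 : M ≤ 1 := by rw [hM, div_le_one (by linarith)]; linarith
  linarith [cube_div_two_le_sub_div hM0 hM1]

theorem stmt_8 (x R β₀ : ℝ) (hx : 0 < x) (hR : 0 < R) (hβ : Real.exp β₀ < R)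
    (M Y : ℝ)
    (hM : M = (Real.exp (x / 2) - 1) / (Real.exp (x / 2) + 1))
    (hY : Y = (Real.exp x - 1) /
      (R * Real.exp (-β₀) + Real.exp x + 1 + Real.exp (x + β₀) / R))
    (h1 : M / 2 ≤ Y) (h2 : M - Y < M ^ 3 / 2) :
    1 < R * Real.exp (-β₀) ∧ R * Real.exp (-β₀) < Real.exp x :=
  stmt_8_general x R β₀ hx hR hβ M Y hM hY h2
end

section
/- Let n, h, j be natural numbers with h < j ≤ n, let a : {1,…,n} → ℝ and y : {1,…,n} → ℝ, and let y_j ∈ ℝ. For σ ∈ {0,1}ⁿ define f(σ) = y_K where K = max{k : h < k ≤ n and σ_k = 1} if this set is nonempty, and f(σ) = y_j otherwise. Then Σ_{σ∈{0,1}ⁿ} (Πᵢ a_i^{1−σ_i}·(1−a_i)^{σ_i})·f(σ) = (Π_{h<i≤n} a_i)·y_j + Σ_{h<k≤n} ((1−a_k)·Π_{k<i≤n} a_i)·y_k. -/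
/-!
Adding the largest index `m` to the index set splits every world according to whether `m` is
switched on: with probability `a m` it is off and nothing changes, with probability `1 - a m` it is
on and, when `h < m`, it is the top neighbour, whatever the other coordinates are. This gives the
recurrence `s(n+1) = a (n+1) * s(n) + (1 - a (n+1)) * y (n+1)`, which the closed form also
satisfies; below the threshold `h` no index can be the top neighbour and `s = yj`.
-/

open Finset

section WorldWeight

variable {α R : Type*} [DecidableEq α] [CommRing R]

/-- The probability of the world `T ⊆ s`, in which exactly the indices of `T` take their
`b`-version (`σ_i = 1`). -/
def worldWeight (a : α → R) (s T : Finset α) : R :=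
  ∏ i ∈ s, if i ∈ T then 1 - a i else a i

theorem worldWeight_insert_of_notMem {a : α → R} {s T : Finset α} {m : α} (hm : m ∉ s)
    (hT : T ⊆ s) : worldWeight a (insert m s) T = a m * worldWeight a s T := by
  rw [worldWeight, prod_insert hm, if_neg fun hmT => hm (hT hmT), worldWeight]

theorem worldWeight_insert_insert {a : α → R} {s T : Finset α} {m : α} (hm : m ∉ s) :
    worldWeight a (insert m s) (insert m T) = (1 - a m) * worldWeight a s T := by
  rw [worldWeight, prod_insert hm, if_pos (mem_insert_self m T), worldWeight]
  congr 1
  refine prod_congr rfl fun i hi => ?_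
  simp only [mem_insert, ne_of_mem_of_not_mem hi hm, false_or]

theorem sum_powerset_insert_worldWeight_mul {a : α → R} {s : Finset α} {m : α} (hm : m ∉ s)
    (g : Finset α → R) :
    ∑ T ∈ (insert m s).powerset, worldWeight a (insert m s) T * g T
      = a m * ∑ T ∈ s.powerset, worldWeight a s T * g T
        + (1 - a m) * ∑ T ∈ s.powerset, worldWeight a s T * g (insert m T) := by
  rw [sum_powerset_insert hm, mul_sum, mul_sum]
  congr 1 <;> refine sum_congr rfl fun T hT => ?_
  · rw [worldWeight_insert_of_notMem hm (mem_powerset.mp hT), mul_assoc]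
  · rw [worldWeight_insert_insert hm, mul_assoc]

theorem sum_powerset_worldWeight (a : α → R) (s : Finset α) :
    ∑ T ∈ s.powerset, worldWeight a s T = 1 := by
  induction s using Finset.induction_on with
  | empty => simp [worldWeight]
  | insert m s hm ih =>
    simpa [ih] using sum_powerset_insert_worldWeight_mul (a := a) hm fun _ => (1 : R)

end WorldWeight

noncomputable def topLabel (h : ℕ) (y : ℕ → ℝ) (yj : ℝ) (T : Finset ℕ) : ℝ :=
  if hT : (T.filter (fun k => h < k)).Nonempty
  then y ((T.filter (fun k => h < k)).max' hT) else yj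

theorem topLabel_of_forall_le {h : ℕ} {y : ℕ → ℝ} {yj : ℝ} {T : Finset ℕ}
    (hT : ∀ k ∈ T, k ≤ h) : topLabel h y yj T = yj := by
  rw [topLabel, dif_neg]
  simpa [filter_nonempty_iff] using hT

theorem topLabel_insert_of_forall_lt {h m : ℕ} {y : ℕ → ℝ} {yj : ℝ} {T : Finset ℕ}
    (hhm : h < m) (hT : ∀ k ∈ T, k < m) : topLabel h y yj (insert m T) = y m := by
  have hfilter : (insert m T).filter (fun k => h < k) = insert m (T.filter (fun k => h < k)) :=
    by rw [filter_insert, if_pos hhm]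
  have hne : ((insert m T).filter (fun k => h < k)).Nonempty := hfilter ▸ insert_nonempty _ _
  have hmax : ((insert m T).filter (fun k => h < k)).max' hne = m := by
    refine le_antisymm (max'_le _ _ _ fun k hk => ?_) (le_max' _ _ (by simp [hhm]))
    rcases mem_insert.mp (hfilter ▸ hk) with rfl | hk
    exacts [le_rfl, (hT k (mem_filter.mp hk).1).le]
  rw [topLabel, dif_pos hne, hmax]

theorem sum_worldWeight_mul_topLabel_of_le {n h : ℕ} (hnh : n ≤ h) (a y : ℕ → ℝ) (yj : ℝ) :
    ∑ T ∈ (Icc 1 n).powerset, worldWeight a (Icc 1 n) T * topLabel h y yj T = yj := by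
  have hlabel : ∀ T ∈ (Icc 1 n).powerset, topLabel h y yj T = yj := fun T hT =>
    topLabel_of_forall_le fun k hk => ((mem_Icc.mp (mem_powerset.mp hT hk)).2).trans hnh
  rw [sum_congr rfl fun T hT => by rw [hlabel T hT], ← sum_mul, sum_powerset_worldWeight, one_mul]

theorem sum_worldWeight_mul_topLabel_succ {n h : ℕ} (hhn : h ≤ n) (a y : ℕ → ℝ) (yj : ℝ) :
    ∑ T ∈ (Icc 1 (n + 1)).powerset, worldWeight a (Icc 1 (n + 1)) T * topLabel h y yj T
      = a (n + 1) * ∑ T ∈ (Icc 1 n).powerset, worldWeight a (Icc 1 n) T * topLabel h y yj T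
        + (1 - a (n + 1)) * y (n + 1) := by
  have hnotMem : n + 1 ∉ Icc 1 n := by simp
  have hlabel : ∀ T ∈ (Icc 1 n).powerset,
      worldWeight a (Icc 1 n) T * topLabel h y yj (insert (n + 1) T)
        = worldWeight a (Icc 1 n) T * y (n + 1) := fun T hT => by
    rw [topLabel_insert_of_forall_lt (Nat.lt_succ_of_le hhn) fun k hk =>
      Nat.lt_succ_of_le (mem_Icc.mp (mem_powerset.mp hT hk)).2]
  rw [← insert_Icc_right_eq_Icc_add_one (Nat.le_add_left 1 n),
    sum_powerset_insert_worldWeight_mul hnotMem, sum_congr rfl hlabel, ← sum_mul,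
    sum_powerset_worldWeight, one_mul]

theorem closedForm_succ {n h : ℕ} (hhn : h ≤ n) (a y : ℕ → ℝ) (yj : ℝ) :
    (∏ i ∈ Ioc h (n + 1), a i) * yj
        + ∑ k ∈ Ioc h (n + 1), ((1 - a k) * ∏ i ∈ Ioc k (n + 1), a i) * y k
      = a (n + 1) * ((∏ i ∈ Ioc h n, a i) * yj
          + ∑ k ∈ Ioc h n, ((1 - a k) * ∏ i ∈ Ioc k n, a i) * y k)
        + (1 - a (n + 1)) * y (n + 1) := by
  have hinner : ∀ k ∈ Ioc h n, ((1 - a k) * ∏ i ∈ Ioc k (n + 1), a i) * y k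
      = a (n + 1) * (((1 - a k) * ∏ i ∈ Ioc k n, a i) * y k) := fun k hk => by
    rw [prod_Ioc_succ_top (mem_Ioc.mp hk).2]; ring
  rw [prod_Ioc_succ_top hhn, sum_Ioc_succ_top hhn, sum_congr rfl hinner, ← mul_sum, Ioc_self,
    prod_empty]
  ring

theorem sum_worldWeight_mul_topLabel (n h : ℕ) (a y : ℕ → ℝ) (yj : ℝ) :
    ∑ T ∈ (Icc 1 n).powerset, worldWeight a (Icc 1 n) T * topLabel h y yj T
      = (∏ i ∈ Ioc h n, a i) * yj
        + ∑ k ∈ Ioc h n, ((1 - a k) * ∏ i ∈ Ioc k n, a i) * y k := by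
  induction n with
  | zero => rw [sum_worldWeight_mul_topLabel_of_le (Nat.zero_le h)]; simp
  | succ n ih =>
    by_cases hhn : h ≤ n
    · rw [sum_worldWeight_mul_topLabel_succ hhn, closedForm_succ hhn, ih]
    · rw [sum_worldWeight_mul_topLabel_of_le (not_le.mp hhn), Ioc_eq_empty (not_lt.mpr
        (not_le.mp hhn)), prod_empty, sum_empty, one_mul, add_zero]

theorem stmt_15_general (n h : ℕ)
    (a y : ℕ → ℝ) (yj : ℝ)
    (f : Finset ℕ → ℝ)
    (hf : ∀ T : Finset ℕ, f T =
      if hT : (T.filter (fun k => h < k)).Nonempty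
      then y ((T.filter (fun k => h < k)).max' hT) else yj) :
    ∑ T ∈ (Finset.Icc 1 n).powerset,
        (∏ i ∈ Finset.Icc 1 n, if i ∈ T then 1 - a i else a i) * f T
      = (∏ i ∈ Finset.Ioc h n, a i) * yj
        + ∑ k ∈ Finset.Ioc h n, ((1 - a k) * ∏ i ∈ Finset.Ioc k n, a i) * y k := by
  rw [show f = topLabel h y yj from funext hf]
  exact sum_worldWeight_mul_topLabel n h a y yj

theorem stmt_15 (n h j : ℕ) (hhj : h < j) (hjn : j ≤ n)
    (a y : ℕ → ℝ) (yj : ℝ)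
    (f : Finset ℕ → ℝ)
    (hf : ∀ T : Finset ℕ, f T =
      if hT : (T.filter (fun k => h < k)).Nonempty
      then y ((T.filter (fun k => h < k)).max' hT) else yj) :
    ∑ T ∈ (Finset.Icc 1 n).powerset,
        (∏ i ∈ Finset.Icc 1 n, if i ∈ T then 1 - a i else a i) * f T
      = (∏ i ∈ Finset.Ioc h n, a i) * yj
        + ∑ k ∈ Finset.Ioc h n, ((1 - a k) * ∏ i ∈ Finset.Ioc k n, a i) * y k :=
  stmt_15_general n h a y yj f hf
end

section
/- Let n, h, j be natural numbers with h < n and h < j ≤ n. Let y : {1,…,n} → [0,1] and y_j ∈ [0,1] with y_n = 0, and for each i let [l_i, u_i] ⊆ [0,1] with l_i ≤ u_i. Define T(b) = (Π_{h<i≤n} b_i)·y_j + Σ_{h<k≤n} ((1−b_k)·Π_{k<i≤n} b_i)·y_k and T'(b) = (Π_{h<i<n} b_i)·y_j + Σ_{h<k<n} ((1−b_k)·Π_{k<i<n} b_i)·y_k. Then sup{T(b) : b_i ∈ [l_i,u_i] for all i} = u_n · sup{T'(b) : b_i ∈ [l_i,u_i] for h < i < n}. -/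
/-!
Since `y n = 0`, the last example contributes nothing to the sum, and every remaining term of
`T b`, as well as the leading product, carries the factor `b n`; hence `T b = b n * T' b`.
The factor `T' b` is nonnegative on the box and does not depend on `b n`, so its supremum
factors through the choice `b n = u n`.
-/

open Finset

/-- The paper's `T'`, with the examples `h < k < m`. -/
def nnMarginal {R : Type*} [CommRing R] (h m : ℕ) (yj : R) (y b : ℕ → R) : R :=
  (∏ i ∈ Ioo h m, b i) * yj + ∑ k ∈ Ioo h m, ((1 - b k) * ∏ i ∈ Ioo k m, b i) * y k

section

variable {R : Type*} [CommRing R] {h m : ℕ} {yj : R} {y : ℕ → R}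

theorem nnMarginal_congr {b b' : ℕ → R} (hbb : ∀ i ∈ Ioo h m, b i = b' i) :
    nnMarginal h m yj y b = nnMarginal h m yj y b' := by
  have hprod : ∀ k, h ≤ k → ∏ i ∈ Ioo k m, b i = ∏ i ∈ Ioo k m, b' i := fun k hk =>
    prod_congr rfl fun i hi => hbb i (Ioo_subset_Ioo_left hk hi)
  unfold nnMarginal
  rw [hprod h le_rfl]
  congr 1
  exact sum_congr rfl fun k hk => by rw [hprod k (mem_Ioo.1 hk).1.le, hbb k hk]

theorem nnMarginal_nonneg [PartialOrder R] [IsOrderedRing R] {b : ℕ → R}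
    (hb₀ : ∀ i ∈ Ioo h m, 0 ≤ b i) (hb₁ : ∀ i ∈ Ioo h m, b i ≤ 1)
    (hy : ∀ k ∈ Ioo h m, 0 ≤ y k) (hyj : 0 ≤ yj) :
    0 ≤ nnMarginal h m yj y b := by
  have hprod : ∀ k, h ≤ k → 0 ≤ ∏ i ∈ Ioo k m, b i := fun k hk =>
    prod_nonneg fun i hi => hb₀ i (Ioo_subset_Ioo_left hk hi)
  refine add_nonneg (mul_nonneg (hprod h le_rfl) hyj) (sum_nonneg fun k hk => ?_)
  exact mul_nonneg (mul_nonneg (sub_nonneg.2 (hb₁ k hk)) (hprod k (mem_Ioo.1 hk).1.le)) (hy k hk)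

theorem prod_Ioc_mul_add_sum_eq_mul_nnMarginal {n : ℕ} (hhn : h < n) (hyn : y n = 0)
    (b : ℕ → R) :
    (∏ i ∈ Ioc h n, b i) * yj + ∑ k ∈ Ioc h n, ((1 - b k) * ∏ i ∈ Ioc k n, b i) * y k
      = b n * nnMarginal h n yj y b := by
  have hprod : ∀ k < n, ∏ i ∈ Ioc k n, b i = b n * ∏ i ∈ Ioo k n, b i := fun k hk => by
    rw [← Ioo_insert_right hk, prod_insert right_notMem_Ioo]
  rw [← Ioo_insert_right hhn, sum_insert right_notMem_Ioo, hyn, mul_zero, zero_add,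
    Ioo_insert_right hhn, hprod h hhn,
    sum_congr rfl fun k hk => by rw [hprod k (mem_Ioo.1 hk).2], nnMarginal, mul_add, mul_sum]
  congr 1
  · ring
  · exact sum_congr rfl fun k _ => by ring

end

theorem exists_forall_mem_Icc_eqOn_update {ι α : Type*} [Preorder α]
    {l u b : ι → α} {s : Set ι} {n : ι} (hlu : ∀ i, l i ≤ u i)
    (hb : ∀ i ∈ s, b i ∈ Set.Icc (l i) (u i)) (hn : n ∉ s) :
    ∃ b' : ι → α, (∀ i, b' i ∈ Set.Icc (l i) (u i)) ∧ (∀ i ∈ s, b' i = b i) ∧ b' n = u n := by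
  classical
  refine ⟨Function.update (s.piecewise b l) n (u n), fun i => ?_, fun i hi => ?_,
    Function.update_self ..⟩
  · rcases eq_or_ne i n with rfl | hin
    · simpa using hlu i
    · rw [Function.update_of_ne hin]
      by_cases hi : i ∈ s
      · simpa [hi] using hb i hi
      · simpa [hi] using hlu i
  · rw [Function.update_of_ne (ne_of_mem_of_not_mem hi hn), s.piecewise_eq_of_mem _ _ hi]

theorem stmt_18_general (n h : ℕ) (hhn : h < n)
    (y : ℕ → ℝ) (yj : ℝ) (hy : ∀ i, y i ∈ Set.Icc (0 : ℝ) 1)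
    (hyj : yj ∈ Set.Icc (0 : ℝ) 1) (hyn : y n = 0)
    (l u : ℕ → ℝ) (hlu : ∀ i, l i ≤ u i) (hl : ∀ i, 0 ≤ l i) (hu : ∀ i, u i ≤ 1)
    (T T' : (ℕ → ℝ) → ℝ)
    (hT : T = fun b => (∏ i ∈ Finset.Ioc h n, b i) * yj
        + ∑ k ∈ Finset.Ioc h n, ((1 - b k) * ∏ i ∈ Finset.Ioc k n, b i) * y k)
    (hT' : T' = fun b => (∏ i ∈ Finset.Ioo h n, b i) * yj
        + ∑ k ∈ Finset.Ioo h n, ((1 - b k) * ∏ i ∈ Finset.Ioo k n, b i) * y k) :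
    sSup (T '' {b | ∀ i, b i ∈ Set.Icc (l i) (u i)})
      = u n * sSup (T' '' {b | ∀ i ∈ Set.Ioo h n, b i ∈ Set.Icc (l i) (u i)}) := by
  replace hT' : T' = nnMarginal h n yj y := hT'
  replace hT : T = fun b => b n * T' b :=
    hT.trans (funext (hT' ▸ prod_Ioc_mul_add_sum_eq_mul_nnMarginal hhn hyn))
  subst hT hT'
  have hun : 0 ≤ u n := (hl n).trans (hlu n)
  rw [← smul_eq_mul, ← Real.sSup_smul_of_nonneg hun]
  apply csSup_eq_csSup_of_forall_exists_le
  · rintro _ ⟨b, hb, rfl⟩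
    refine ⟨_, Set.smul_mem_smul_set ⟨b, fun i _ => hb i, rfl⟩, ?_⟩
    exact mul_le_mul_of_nonneg_right (hb n).2 <|
      nnMarginal_nonneg (fun i _ => (hl i).trans (hb i).1) (fun i _ => (hb i).2.trans (hu i))
        (fun k _ => (hy k).1) hyj.1
  · rintro _ ⟨_, ⟨b, hb, rfl⟩, rfl⟩
    obtain ⟨b', hb'box, hb'b, hb'n⟩ :=
      exists_forall_mem_Icc_eqOn_update (n := n) hlu hb Set.right_notMem_Ioo
    refine ⟨_, ⟨b', hb'box, rfl⟩, ?_⟩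
    dsimp only
    rw [hb'n, nnMarginal_congr fun i hi => hb'b i (by simpa using hi), smul_eq_mul]

theorem stmt_18 (n h j : ℕ) (hhn : h < n) (hhj : h < j) (hjn : j ≤ n)
    (y : ℕ → ℝ) (yj : ℝ) (hy : ∀ i, y i ∈ Set.Icc (0 : ℝ) 1)
    (hyj : yj ∈ Set.Icc (0 : ℝ) 1) (hyn : y n = 0)
    (l u : ℕ → ℝ) (hlu : ∀ i, l i ≤ u i) (hl : ∀ i, 0 ≤ l i) (hu : ∀ i, u i ≤ 1)
    (T T' : (ℕ → ℝ) → ℝ)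
    (hT : T = fun b => (∏ i ∈ Finset.Ioc h n, b i) * yj
        + ∑ k ∈ Finset.Ioc h n, ((1 - b k) * ∏ i ∈ Finset.Ioc k n, b i) * y k)
    (hT' : T' = fun b => (∏ i ∈ Finset.Ioo h n, b i) * yj
        + ∑ k ∈ Finset.Ioo h n, ((1 - b k) * ∏ i ∈ Finset.Ioo k n, b i) * y k) :
    sSup (T '' {b | ∀ i, b i ∈ Set.Icc (l i) (u i)})
      = u n * sSup (T' '' {b | ∀ i ∈ Set.Ioo h n, b i ∈ Set.Icc (l i) (u i)}) :=
  stmt_18_general n h hhn y yj hy hyj hyn l u hlu hl hu T T' hT hT'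
end
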